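/- arXiv:1505.02490 — 4 statements merged into one kernel-verified Lean document; each statement's English description precedes it below -/
import Mathlib

section
/- Let α ∈ (0,1) and τ ∈ (-1,0). Then the function t ↦ t^{-1-2α}·(χ_{(0,1)}(t)(1-t)^τ + (1+t)^τ - 2) is Lebesgue integrable on (0,+∞); in particular the integral defining C(τ) converges absolutely. -/
/-!
Near `0` the second difference `(1 - t)^τ + (1 + t)^τ - 2` is smooth with vanishing value and
first derivative at `0`, hence `O(t²)`, which makes the integrand `O(t^(1 - 2α))`, integrable as
`α < 1`. Near `t = 1` the only singularity is `(1 - t)^τ`, integrable as `τ > -1`, times a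
continuous factor. For `t > 1` the second difference is bounded by `2` as `τ ≤ 0`, and
`t^(-1 - 2α)` is integrable at infinity as `α > 0`.
-/

open MeasureTheory Set

theorem norm_le_mul_sq_of_hasDerivAt_of_hasDerivAt {E : Type*} [NormedAddCommGroup E]
    [NormedSpace ℝ E] {f f' f'' : ℝ → E} {a C : ℝ}
    (hf : ∀ x ∈ Icc 0 a, HasDerivAt f (f' x) x) (hf' : ∀ x ∈ Icc 0 a, HasDerivAt f' (f'' x) x)
    (hf'' : ∀ x ∈ Icc 0 a, ‖f'' x‖ ≤ C) (h₀ : f 0 = 0) (h₀' : f' 0 = 0) :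
    ∀ x ∈ Icc 0 a, ‖f x‖ ≤ C * x ^ 2 := by
  have hzero {x : ℝ} (hx : x ∈ Icc 0 a) : (0 : ℝ) ∈ Icc 0 x := ⟨le_rfl, hx.1⟩
  have hsub {x : ℝ} (hx : x ∈ Icc 0 a) : Icc 0 x ⊆ Icc 0 a := Icc_subset_Icc_right hx.2
  have hf'_le : ∀ x ∈ Icc 0 a, ‖f' x‖ ≤ C * x := by
    intro x hx
    simpa [h₀', abs_of_nonneg hx.1] using (convex_Icc 0 x).norm_image_sub_le_of_norm_hasDerivWithin_le
      (fun y hy => (hf' y (hsub hx hy)).hasDerivWithinAt) (fun y hy => hf'' y (hsub hx hy))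
      (hzero hx) (right_mem_Icc.2 hx.1)
  intro x hx
  have hC : 0 ≤ C := (norm_nonneg _).trans (hf'' 0 (hsub hx (hzero hx)))
  have hbound : ∀ y ∈ Icc 0 x, ‖f' y‖ ≤ C * x := fun y hy =>
    (hf'_le y (hsub hx hy)).trans (mul_le_mul_of_nonneg_left hy.2 hC)
  simpa [h₀, abs_of_nonneg hx.1, sq, mul_assoc] using
    (convex_Icc 0 x).norm_image_sub_le_of_norm_hasDerivWithin_le
      (fun y hy => (hf y (hsub hx hy)).hasDerivWithinAt) hbound (hzero hx) (right_mem_Icc.2 hx.1)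

theorem hasDerivAt_one_add_rpow (p t : ℝ) (ht : 1 + t ≠ 0) :
    HasDerivAt (fun t => (1 + t) ^ p) (p * (1 + t) ^ (p - 1)) t := by
  simpa using ((hasDerivAt_id t).const_add 1).rpow_const (p := p) (Or.inl ht)

theorem hasDerivAt_one_sub_rpow (p t : ℝ) (ht : 1 - t ≠ 0) :
    HasDerivAt (fun t => (1 - t) ^ p) (-(p * (1 - t) ^ (p - 1))) t := by
  simpa using ((hasDerivAt_id t).const_sub 1).rpow_const (p := p) (Or.inl ht)

theorem exists_abs_one_sub_rpow_add_one_add_rpow_sub_two_le (τ : ℝ) :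
    ∃ C, ∀ t ∈ Icc (0 : ℝ) (1 / 2), |(1 - t) ^ τ + (1 + t) ^ τ - 2| ≤ C * t ^ 2 := by
  have hne {t : ℝ} (ht : t ∈ Icc (0 : ℝ) (1 / 2)) : 1 - t ≠ 0 ∧ 1 + t ≠ 0 := by
    constructor <;> linarith [ht.1, ht.2]
  set f'' : ℝ → ℝ := fun t => τ * (τ - 1) * (1 + t) ^ (τ - 2) + τ * (τ - 1) * (1 - t) ^ (τ - 2)
  obtain ⟨C, hC⟩ := isCompact_Icc.exists_bound_of_continuousOn (f := f'') <| by
    refine ContinuousOn.add (continuousOn_const.mul ?_) (continuousOn_const.mul ?_) <;>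
      refine ContinuousOn.rpow_const (by fun_prop) fun t ht => Or.inl ?_
    exacts [(hne ht).2, (hne ht).1]
  refine ⟨C, norm_le_mul_sq_of_hasDerivAt_of_hasDerivAt
    (f' := fun t => τ * (1 + t) ^ (τ - 1) - τ * (1 - t) ^ (τ - 1)) (f'' := f'') ?_ ?_ hC
    (by norm_num) (by norm_num)⟩
  · intro t ht
    exact (((hasDerivAt_one_sub_rpow τ t (hne ht).1).add
      (hasDerivAt_one_add_rpow τ t (hne ht).2)).sub_const 2).congr_deriv (by ring)
  · intro t ht
    refine (((hasDerivAt_one_add_rpow (τ - 1) t (hne ht).2).const_mul τ).sub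
      ((hasDerivAt_one_sub_rpow (τ - 1) t (hne ht).1).const_mul τ)).congr_deriv ?_
    rw [show τ - 1 - 1 = τ - 2 by ring]
    ring

/-- The second difference `u (1 - t) + u (1 + t) - 2 u 1` of `u x = x₊ ^ τ`. -/
noncomputable def secondDiff (τ t : ℝ) : ℝ :=
  (Ioo (0 : ℝ) 1).indicator (fun s => (1 - s) ^ τ) t + (1 + t) ^ τ - 2

theorem integrable_indicator_Ioo_one_sub_rpow {τ : ℝ} (hτ : -1 < τ) :
    Integrable ((Ioo (0 : ℝ) 1).indicator fun s => (1 - s) ^ τ) := by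
  rw [integrable_indicator_iff measurableSet_Ioo,
    ← intervalIntegrable_iff_integrableOn_Ioo_of_le zero_le_one]
  simpa using ((intervalIntegral.intervalIntegrable_rpow' hτ (a := 0) (b := 1)).comp_sub_left 1).symm

namespace secondDiff

variable {α τ : ℝ}

theorem measurable : Measurable (secondDiff τ) := by
  have : Measurable ((Ioo (0 : ℝ) 1).indicator fun s => (1 - s) ^ τ) :=
    (by fun_prop : Measurable fun s : ℝ => (1 - s) ^ τ).indicator measurableSet_Ioo
  unfold secondDiff
  fun_prop

theorem integrableOn_rpow_mul_Ioc_zero_half (hα : α < 1) :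
    IntegrableOn (fun t => t ^ (-1 - 2 * α) * secondDiff τ t) (Ioc 0 (1 / 2)) := by
  obtain ⟨C, hC⟩ := exists_abs_one_sub_rpow_add_one_add_rpow_sub_two_le τ
  have hdom : IntegrableOn (fun t : ℝ => C * t ^ (1 - 2 * α)) (Ioc 0 (1 / 2)) :=
    ((intervalIntegrable_iff_integrableOn_Ioc_of_le (by norm_num)).1
      (intervalIntegral.intervalIntegrable_rpow' (by linarith))).const_mul C
  refine hdom.mono' ((by fun_prop : Measurable fun t : ℝ => t ^ (-1 - 2 * α)).mul
    measurable).aestronglyMeasurable.restrict <|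
    (ae_restrict_iff' measurableSet_Ioc).2 <| ae_of_all _ fun t ht => ?_
  have ht₀ : 0 < t := ht.1
  rw [secondDiff, indicator_of_mem (show t ∈ Ioo (0 : ℝ) 1 from ⟨ht₀, by linarith [ht.2]⟩),
    norm_mul, Real.norm_of_nonneg (Real.rpow_nonneg ht₀.le _), Real.norm_eq_abs]
  calc t ^ (-1 - 2 * α) * |(1 - t) ^ τ + (1 + t) ^ τ - 2|
      ≤ t ^ (-1 - 2 * α) * (C * t ^ (2 : ℝ)) := by
        rw [Real.rpow_two]
        exact mul_le_mul_of_nonneg_left (hC t ⟨ht₀.le, ht.2⟩) (Real.rpow_nonneg ht₀.le _)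
    _ = C * t ^ (1 - 2 * α) := by
        rw [mul_left_comm, ← Real.rpow_add ht₀]
        ring_nf

theorem integrableOn_rpow_mul_Icc_half_one (hτ : -1 < τ) :
    IntegrableOn (fun t => t ^ (-1 - 2 * α) * secondDiff τ t) (Icc (1 / 2) 1) := by
  refine IntegrableOn.continuousOn_mul
    (ContinuousOn.rpow_const continuousOn_id fun t ht => Or.inl (by linarith [ht.1]))
    (((integrable_indicator_Ioo_one_sub_rpow hτ).integrableOn.add ?_).sub
      (integrableOn_const (by simp))) isCompact_Icc
  exact (ContinuousOn.rpow_const (by fun_prop) fun t ht => Or.inl (by linarith [ht.1])).integrableOn_Icc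

theorem integrableOn_rpow_mul_Ioi_one (hα : 0 < α) (hτ : τ ≤ 0) :
    IntegrableOn (fun t => t ^ (-1 - 2 * α) * secondDiff τ t) (Ioi 1) := by
  refine (integrableOn_Ioi_rpow_of_lt (by linarith) one_pos).mul_bdd (c := 2)
    measurable.aestronglyMeasurable.restrict <|
    (ae_restrict_iff' measurableSet_Ioi).2 <| ae_of_all _ fun t (ht : 1 < t) => ?_
  have hpos : 0 < (1 + t) ^ τ := Real.rpow_pos_of_pos (by linarith) τ
  have hle : (1 + t) ^ τ ≤ 1 := Real.rpow_le_one_of_one_le_of_nonpos (by linarith) hτ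
  rw [secondDiff, indicator_of_notMem fun h => ht.not_gt h.2, Real.norm_eq_abs, abs_le]
  constructor <;> linarith

end secondDiff

/-- For `α ∈ (0,1)` and `τ ∈ (-1,0)`, the function
`t ↦ t^(-1-2α) (χ_{(0,1)}(t)(1-t)^τ + (1+t)^τ - 2)` is Lebesgue integrable on `(0,∞)`,
so the integral defining `C(τ)` converges absolutely. -/
theorem stmt_0 (α τ : ℝ) (hα : α ∈ Ioo (0:ℝ) 1) (hτ : τ ∈ Ioo (-1:ℝ) 0) :
    IntegrableOn
      (fun t : ℝ => t ^ (-1 - 2*α) *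
        ((Ioo (0:ℝ) 1).indicator (fun s => (1 - s) ^ τ) t + (1 + t) ^ τ - 2))
      (Ioi (0:ℝ)) := by
  have hcover : Ioi (0 : ℝ) ⊆ Ioc 0 (1 / 2) ∪ Icc (1 / 2) 1 ∪ Ioi 1 := by
    intro t (ht : 0 < t)
    by_cases h₁ : t ≤ 1 / 2
    · exact Or.inl (Or.inl ⟨ht, h₁⟩)
    by_cases h₂ : t ≤ 1
    · exact Or.inl (Or.inr ⟨by linarith, h₂⟩)
    · exact Or.inr (lt_of_not_ge h₂)
  exact (((secondDiff.integrableOn_rpow_mul_Ioc_zero_half hα.2).union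
    (secondDiff.integrableOn_rpow_mul_Icc_half_one hτ.1)).union
    (secondDiff.integrableOn_rpow_mul_Ioi_one hα.1 hτ.2.le)).mono_set hcover
end

section
/- Let N ≥ 2, α ∈ (0,1), and let Ω ⊂ ℝ^N be a nonempty bounded open set with nonempty boundary, and write ρ(x) = dist(x, ∂Ω). Assume there exists C₀ > 0 such that ∫_{{x ∈ Ω : ρ(x) < t}} ρ(x)^α dx ≤ C₀ t^{1+α} for every t > 0. Then there exists C > 0 such that for every Borel set E ⊂ Ω, ∫_E ρ(x)^{2α-1} dx ≤ C ( ∫_E ρ(x)^α dx )^{2α/(1+α)}; equivalently, ρ^{α-1} belongs to the Marcinkiewicz space M^{p*}(Ω, ρ^α dx) with p* = (1+α)/(1-α), since 2α/(1+α) = 1 - 1/p*. -/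
open MeasureTheory Set

private lemma rid (C₀ t α : ℝ) (ht : 0 < t) (k : ℕ) :
    (t / 2 ^ (k+1)) ^ (α - 1) * (C₀ * (t / 2 ^ k) ^ (1 + α)) =
      (C₀ * 2 ^ (1 - α) * t ^ (2*α)) * ((2:ℝ) ^ (-(2*α))) ^ k := by
  have h2 : (0:ℝ) < 2 := two_pos
  have hrw : ∀ (m : ℕ) (p : ℝ), (t / 2 ^ m) ^ p = t ^ p * 2 ^ (-(m:ℝ)*p) := by
    intro m p
    rw [div_eq_mul_inv, ← Real.rpow_natCast (2:ℝ) m, ← Real.rpow_neg h2.le,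
      Real.mul_rpow ht.le (Real.rpow_nonneg h2.le _), ← Real.rpow_mul h2.le, neg_mul]
  have hgeo : ((2:ℝ) ^ (-(2*α))) ^ k = 2 ^ ((-(2*α))*(k:ℝ)) := by
    rw [← Real.rpow_natCast ((2:ℝ) ^ (-(2*α))) k, ← Real.rpow_mul h2.le]
  rw [hrw (k+1) (α-1), hrw k (1+α), hgeo]
  push_cast
  calc t ^ (α-1) * 2 ^ (-((k:ℝ)+1)*(α-1)) * (C₀ * (t ^ (1+α) * 2 ^ (-(k:ℝ)*(1+α))))
      = C₀ * (t ^ (α-1) * t ^ (1+α)) *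
          ((2:ℝ) ^ (-((k:ℝ)+1)*(α-1)) * 2 ^ (-(k:ℝ)*(1+α))) := by ring
    _ = C₀ * t ^ ((α-1)+(1+α)) * (2:ℝ) ^ ((-((k:ℝ)+1)*(α-1)) + (-(k:ℝ)*(1+α))) := by
        rw [show t ^ ((α-1)+(1+α)) = t ^ (α-1) * t ^ (1+α) from Real.rpow_add ht _ _,
          show (2:ℝ) ^ ((-((k:ℝ)+1)*(α-1)) + (-(k:ℝ)*(1+α))) =
            (2:ℝ) ^ (-((k:ℝ)+1)*(α-1)) * 2 ^ (-(k:ℝ)*(1+α)) from Real.rpow_add h2 _ _]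
    _ = C₀ * t ^ (2*α) * (2:ℝ) ^ ((1-α) + (-(2*α))*(k:ℝ)) := by
        rw [show (α-1)+(1+α) = 2*α by ring,
          show (-((k:ℝ)+1)*(α-1)) + (-(k:ℝ)*(1+α)) = (1-α) + (-(2*α))*(k:ℝ) by ring]
    _ = (C₀ * 2 ^ (1-α) * t ^ (2*α)) * (2:ℝ) ^ ((-(2*α))*(k:ℝ)) := by
        rw [Real.rpow_add h2]; ring

private lemma aux_small {X : Type*} [MeasurableSpace X] (μ : Measure X) (ρ : X → ℝ)
    (hρm : Measurable ρ) {α : ℝ} (hα0 : 0 < α) (hα1 : α < 1) {C₀ : ℝ} (hC₀ : 0 ≤ C₀)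
    (E : Set X) (hρpos : ∀ x ∈ E, 0 < ρ x)
    (hvol : ∀ t : ℝ, 0 < t →
      ∫⁻ x in E ∩ {x | ρ x < t}, ENNReal.ofReal (ρ x ^ α) ∂μ ≤ ENNReal.ofReal (C₀ * t ^ (1+α)))
    {t : ℝ} (ht : 0 < t) :
    ∫⁻ x in E ∩ {x | ρ x < t}, ENNReal.ofReal (ρ x ^ (2*α-1)) ∂μ ≤
      ENNReal.ofReal (C₀ * 2 ^ (1-α)) * (1 - ENNReal.ofReal (2 ^ (-(2*α))))⁻¹ *
        ENNReal.ofReal (t ^ (2*α)) := by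
  set A : ℕ → Set X := fun k => E ∩ {x | t / 2^(k+1) ≤ ρ x ∧ ρ x < t / 2^k} with hA
  have hcover : E ∩ {x | ρ x < t} ⊆ ⋃ k, A k := by
    rintro x ⟨hxE, hxt⟩
    have hx0 : 0 < ρ x := hρpos x hxE
    have hex : ∃ k, t ≤ ρ x * 2^(k+1) := by
      obtain ⟨n, hn⟩ := pow_unbounded_of_one_lt (t / ρ x) one_lt_two
      refine ⟨n, ?_⟩
      have h1 : t / ρ x ≤ (2:ℝ)^(n+1) :=
        le_of_lt (lt_of_lt_of_le hn (pow_le_pow_right₀ one_le_two (Nat.le_succ n)))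
      calc t = (t / ρ x) * ρ x := by field_simp
        _ ≤ (2:ℝ)^(n+1) * ρ x := by
            apply mul_le_mul_of_nonneg_right h1 hx0.le
        _ = ρ x * 2^(n+1) := by ring
    set k := Nat.find hex with hk
    have hspec : t ≤ ρ x * 2^(k+1) := Nat.find_spec hex
    refine mem_iUnion.mpr ⟨k, hxE, ?_, ?_⟩
    · rw [div_le_iff₀ (by positivity)]
      linarith [hspec]
    · rcases Nat.eq_zero_or_pos k with h0 | hpos
      · rw [h0]; simpa using hxt
      · have hmin : ¬ t ≤ ρ x * 2^((k-1)+1) := Nat.find_min hex (Nat.sub_lt hpos one_pos)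
        rw [Nat.sub_add_cancel hpos] at hmin
        rw [lt_div_iff₀ (by positivity)]
        linarith [lt_of_not_ge hmin]
  have hAsub : ∀ k, A k ⊆ E ∩ {x | ρ x < t / 2^k} := fun k x hx => ⟨hx.1, hx.2.2⟩
  have hk : ∀ k : ℕ, ∫⁻ x in A k, ENNReal.ofReal (ρ x ^ (2*α-1)) ∂μ ≤
      ENNReal.ofReal ((t/2^(k+1))^(α-1)) * ENNReal.ofReal (C₀ * (t/2^k)^(1+α)) := by
    intro k
    have hpos : (0:ℝ) < t / 2^(k+1) := by positivity
    have step1 : ∫⁻ x in A k, ENNReal.ofReal (ρ x ^ (2*α-1)) ∂μ ≤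
        ∫⁻ x in A k, ENNReal.ofReal ((t/2^(k+1))^(α-1)) * ENNReal.ofReal (ρ x ^ α) ∂μ := by
      apply setLIntegral_mono
      · exact (measurable_const.mul ((hρm.pow_const _).ennreal_ofReal))
      · intro x hx
        have hxρ : 0 < ρ x := lt_of_lt_of_le hpos hx.2.1
        have hsplit : ρ x ^ (2*α-1) = ρ x ^ (α-1) * ρ x ^ α := by
          rw [← Real.rpow_add hxρ]; ring_nf
        rw [hsplit, ← ENNReal.ofReal_mul (by positivity)]
        apply ENNReal.ofReal_le_ofReal
        apply mul_le_mul_of_nonneg_right _ (Real.rpow_nonneg hxρ.le α)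
        exact Real.rpow_le_rpow_of_nonpos hpos hx.2.1 (by linarith)
    rw [lintegral_const_mul' _ _ ENNReal.ofReal_ne_top] at step1
    refine step1.trans ?_
    exact mul_le_mul_right ((lintegral_mono_set (hAsub k)).trans
      (hvol _ (by positivity))) _
  calc ∫⁻ x in E ∩ {x | ρ x < t}, ENNReal.ofReal (ρ x ^ (2*α-1)) ∂μ
      ≤ ∫⁻ x in ⋃ k, A k, ENNReal.ofReal (ρ x ^ (2*α-1)) ∂μ := lintegral_mono_set hcover
    _ ≤ ∑' k, ∫⁻ x in A k, ENNReal.ofReal (ρ x ^ (2*α-1)) ∂μ := lintegral_iUnion_le _ _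
    _ ≤ ∑' k : ℕ, ENNReal.ofReal ((t/2^(k+1))^(α-1)) * ENNReal.ofReal (C₀ * (t/2^k)^(1+α)) :=
        ENNReal.tsum_le_tsum hk
    _ = ∑' k : ℕ, ENNReal.ofReal (C₀ * 2^(1-α) * t^(2*α)) * ENNReal.ofReal ((2:ℝ)^(-(2*α)))^k := by
        congr 1; funext k
        rw [← ENNReal.ofReal_mul (Real.rpow_nonneg (by positivity) _), rid C₀ t α ht k,
          ENNReal.ofReal_mul (by positivity), ENNReal.ofReal_pow (by positivity)]
    _ = ENNReal.ofReal (C₀ * 2^(1-α) * t^(2*α)) * (1 - ENNReal.ofReal ((2:ℝ)^(-(2*α))))⁻¹ := by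
        rw [ENNReal.tsum_mul_left, ENNReal.tsum_geometric]
    _ = ENNReal.ofReal (C₀ * 2 ^ (1-α)) * (1 - ENNReal.ofReal (2 ^ (-(2*α))))⁻¹ *
        ENNReal.ofReal (t ^ (2*α)) := by
        rw [ENNReal.ofReal_mul (by positivity)]; ring

/-- Let `Ω ⊂ ℝ^N` be a nonempty bounded open set, `ρ(x) = dist(x,∂Ω)`. If
`∫_{ρ<t} ρ^α dx ≤ C₀ t^{1+α}` for all `t > 0`, then there is `C > 0` such that
`∫_E ρ^{2α-1} dx ≤ C (∫_E ρ^α dx)^{2α/(1+α)}` for every Borel `E ⊆ Ω`; i.e.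
`ρ^{α-1} ∈ M^{p*}(Ω, ρ^α dx)` with `p* = (1+α)/(1-α)`. -/
theorem stmt_4 (N : ℕ) (hN : 2 ≤ N) (α : ℝ) (hα : α ∈ Ioo (0:ℝ) 1)
    (Ω : Set (EuclideanSpace ℝ (Fin N))) (hΩopen : IsOpen Ω) (hΩne : Ω.Nonempty)
    (hΩbd : Bornology.IsBounded Ω) (hfr : (frontier Ω).Nonempty)
    (C₀ : ℝ) (hC₀ : 0 < C₀)
    (hvol : ∀ t > (0:ℝ),
      ∫⁻ x in {x ∈ Ω | Metric.infDist x (frontier Ω) < t},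
        ENNReal.ofReal (Metric.infDist x (frontier Ω) ^ α) ≤ ENNReal.ofReal (C₀ * t ^ (1+α))) :
    ∃ C : ℝ, 0 < C ∧ ∀ E ⊆ Ω, MeasurableSet E →
      ∫⁻ x in E, ENNReal.ofReal (Metric.infDist x (frontier Ω) ^ (2*α - 1)) ≤
        ENNReal.ofReal C *
          (∫⁻ x in E, ENNReal.ofReal (Metric.infDist x (frontier Ω) ^ α)) ^ (2*α/(1+α)) := by
  obtain ⟨hα0, hα1⟩ := hα
  set ρ : EuclideanSpace ℝ (Fin N) → ℝ := fun x => Metric.infDist x (frontier Ω) with hρ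
  have hρm : Measurable ρ := (Metric.continuous_infDist_pt _).measurable
  have hρpos : ∀ x ∈ Ω, 0 < ρ x := by
    intro x hx
    refine (isClosed_frontier.notMem_iff_infDist_pos hfr).mp ?_
    rw [hΩopen.frontier_eq]
    exact fun h => h.2 hx
  -- the constant
  set K : ENNReal := ENNReal.ofReal (C₀ * 2 ^ (1-α)) * (1 - ENNReal.ofReal ((2:ℝ) ^ (-(2*α))))⁻¹
    with hK
  have hrlt : (2:ℝ) ^ (-(2*α)) < 1 :=
    Real.rpow_lt_one_of_one_lt_of_neg one_lt_two (by linarith)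
  have hKne : K ≠ ⊤ := by
    apply ENNReal.mul_ne_top ENNReal.ofReal_ne_top
    rw [ENNReal.inv_ne_top]
    exact ne_of_gt (tsub_pos_of_lt (by exact_mod_cast ENNReal.ofReal_lt_one.mpr hrlt))
  refine ⟨K.toReal + 1, by positivity, ?_⟩
  intro E hEΩ hE
  set m : ENNReal := ∫⁻ x in E, ENNReal.ofReal (ρ x ^ α) with hm
  -- finiteness of m
  obtain ⟨y₀, hy₀⟩ := hfr
  obtain ⟨R, hR0, hRbd⟩ : ∃ R : ℝ, 0 < R ∧ ∀ x ∈ Ω, ρ x < R := by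
    obtain ⟨r, hr⟩ := Metric.isBounded_iff.mp hΩbd.closure
    refine ⟨max r 0 + 1, by positivity, ?_⟩
    intro x hx
    have h1 : ρ x ≤ dist x y₀ := Metric.infDist_le_dist_of_mem hy₀
    have h2 : dist x y₀ ≤ r := hr (subset_closure hx) (frontier_subset_closure hy₀)
    calc ρ x ≤ r := h1.trans h2
      _ ≤ max r 0 := le_max_left _ _
      _ < max r 0 + 1 := by linarith
  have hmne : m ≠ ⊤ := by
    have : m ≤ ENNReal.ofReal (C₀ * R ^ (1+α)) := by
      refine le_trans (lintegral_mono_set ?_) (hvol R hR0)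
      exact fun x hx => ⟨hEΩ hx, hRbd x (hEΩ hx)⟩
    exact ne_top_of_le_ne_top ENNReal.ofReal_ne_top this
  have hvol' : ∀ t : ℝ, 0 < t →
      ∫⁻ x in E ∩ {x | ρ x < t}, ENNReal.ofReal (ρ x ^ α) ≤ ENNReal.ofReal (C₀ * t ^ (1+α)) := by
    intro t ht
    refine le_trans (lintegral_mono_set ?_) (hvol t ht)
    exact fun x hx => ⟨hEΩ hx.1, hx.2⟩
  have hρposE : ∀ x ∈ E, 0 < ρ x := fun x hx => hρpos x (hEΩ hx)
  -- main two-part estimate, for all t > 0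
  have hmain : ∀ t : ℝ, 0 < t →
      ∫⁻ x in E, ENNReal.ofReal (ρ x ^ (2*α-1)) ≤
        K * ENNReal.ofReal (t ^ (2*α)) + ENNReal.ofReal (t ^ (α-1)) * m := by
    intro t ht
    have hsmall := aux_small volume ρ hρm hα0 hα1 hC₀.le E hρposE hvol' ht
    have hlarge : ∫⁻ x in E ∩ {x | t ≤ ρ x}, ENNReal.ofReal (ρ x ^ (2*α-1)) ≤
        ENNReal.ofReal (t ^ (α-1)) * m := by
      have step1 : ∫⁻ x in E ∩ {x | t ≤ ρ x}, ENNReal.ofReal (ρ x ^ (2*α-1)) ≤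
          ∫⁻ x in E ∩ {x | t ≤ ρ x},
            ENNReal.ofReal (t ^ (α-1)) * ENNReal.ofReal (ρ x ^ α) := by
        apply setLIntegral_mono
        · exact measurable_const.mul ((hρm.pow_const _).ennreal_ofReal)
        · intro x hx
          have hxρ : 0 < ρ x := lt_of_lt_of_le ht hx.2
          have hsplit : ρ x ^ (2*α-1) = ρ x ^ (α-1) * ρ x ^ α := by
            rw [← Real.rpow_add hxρ]; ring_nf
          rw [hsplit, ← ENNReal.ofReal_mul (by positivity)]
          apply ENNReal.ofReal_le_ofReal
          apply mul_le_mul_of_nonneg_right _ (Real.rpow_nonneg hxρ.le α)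
          exact Real.rpow_le_rpow_of_nonpos ht hx.2 (by linarith)
      rw [lintegral_const_mul' _ _ ENNReal.ofReal_ne_top] at step1
      exact step1.trans (mul_le_mul_right (lintegral_mono_set inter_subset_left) _)
    have hsplitE : E = (E ∩ {x | ρ x < t}) ∪ (E ∩ {x | t ≤ ρ x}) := by
      ext x
      constructor
      · intro hx
        rcases lt_or_ge (ρ x) t with h | h
        · exact Or.inl ⟨hx, h⟩
        · exact Or.inr ⟨hx, h⟩
      · rintro (⟨h, _⟩ | ⟨h, _⟩) <;> exact h
    calc ∫⁻ x in E, ENNReal.ofReal (ρ x ^ (2*α-1))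
        = ∫⁻ x in (E ∩ {x | ρ x < t}) ∪ (E ∩ {x | t ≤ ρ x}),
            ENNReal.ofReal (ρ x ^ (2*α-1)) := by rw [← hsplitE]
      _ ≤ (∫⁻ x in E ∩ {x | ρ x < t}, ENNReal.ofReal (ρ x ^ (2*α-1))) +
            ∫⁻ x in E ∩ {x | t ≤ ρ x}, ENNReal.ofReal (ρ x ^ (2*α-1)) :=
          lintegral_union_le _ _ _
      _ ≤ K * ENNReal.ofReal (t ^ (2*α)) + ENNReal.ofReal (t ^ (α-1)) * m :=
          add_le_add hsmall hlarge
  by_cases hm0 : m = 0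
  · -- zero-measure case
    have hf : (fun x => ENNReal.ofReal (ρ x ^ α)) =ᶠ[ae (volume.restrict E)] 0 :=
      (lintegral_eq_zero_iff ((hρm.pow_const _).ennreal_ofReal)).mp hm0
    have hfE : ∀ᵐ x ∂(volume : Measure (EuclideanSpace ℝ (Fin N))), x ∈ E →
        ENNReal.ofReal (ρ x ^ α) = 0 := (ae_restrict_iff' hE).mp hf
    have hE0 : (volume : Measure (EuclideanSpace ℝ (Fin N))) E = 0 := by
      have h1 : ∀ᵐ x ∂(volume : Measure (EuclideanSpace ℝ (Fin N))), x ∉ E := by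
        filter_upwards [hfE] with x hx hxE
        have := hρposE x hxE
        have hpos : 0 < ENNReal.ofReal (ρ x ^ α) :=
          ENNReal.ofReal_pos.mpr (Real.rpow_pos_of_pos this α)
        exact (ne_of_gt hpos) (hx hxE)
      simpa [ae_iff] using h1
    have : (volume : Measure (EuclideanSpace ℝ (Fin N))).restrict E = 0 :=
      Measure.restrict_eq_zero.mpr hE0
    rw [show (∫⁻ x in E, ENNReal.ofReal (ρ x ^ (2*α - 1))) = 0 from by
      rw [this]; exact lintegral_zero_measure _]
    exact zero_le
  · set mr : ℝ := m.toReal with hmr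
    have hmrpos : 0 < mr := ENNReal.toReal_pos hm0 hmne
    set t : ℝ := mr ^ (1/(1+α)) with hts
    have ht : 0 < t := Real.rpow_pos_of_pos hmrpos _
    have h1α : (0:ℝ) < 1 + α := by linarith
    have hX1 : t ^ (2*α) = mr ^ (2*α/(1+α)) := by
      rw [hts, ← Real.rpow_mul hmrpos.le]
      congr 1; field_simp
    have hX2 : ENNReal.ofReal (t ^ (α-1)) * m = ENNReal.ofReal (mr ^ (2*α/(1+α))) := by
      have hmeq : m = ENNReal.ofReal mr := (ENNReal.ofReal_toReal hmne).symm
      have hne : (1+α) ≠ 0 := by linarith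
      have e : 1/(1+α)*(α-1) + 1 = 2*α/(1+α) := by field_simp; ring
      rw [hmeq, ← ENNReal.ofReal_mul (by positivity), hts, ← Real.rpow_mul hmrpos.le,
        show mr ^ (1/(1+α)*(α-1)) * mr = mr ^ (1/(1+α)*(α-1)) * mr ^ (1:ℝ) from by
          rw [Real.rpow_one],
        ← Real.rpow_add hmrpos, e]
    have hfin := hmain t ht
    rw [hX1, hX2] at hfin
    refine hfin.trans ?_
    have hrhs : (∫⁻ x in E, ENNReal.ofReal (ρ x ^ α)) ^ (2*α/(1+α)) =
        ENNReal.ofReal (mr ^ (2*α/(1+α))) := by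
      rw [← hm, show m = ENNReal.ofReal mr from (ENNReal.ofReal_toReal hmne).symm,
        ENNReal.ofReal_rpow_of_pos hmrpos]
    rw [hrhs]
    have hKle : K + 1 ≤ ENNReal.ofReal (K.toReal + 1) := by
      rw [ENNReal.ofReal_add ENNReal.toReal_nonneg zero_le_one,
        ENNReal.ofReal_toReal hKne, ENNReal.ofReal_one]
    calc K * ENNReal.ofReal (mr ^ (2*α/(1+α))) + ENNReal.ofReal (mr ^ (2*α/(1+α)))
        = (K + 1) * ENNReal.ofReal (mr ^ (2*α/(1+α))) := by ring
      _ ≤ ENNReal.ofReal (K.toReal + 1) * ENNReal.ofReal (mr ^ (2*α/(1+α))) :=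
          mul_le_mul_left hKle _
end

section
/- Let N ≥ 2, α ∈ (0,1) and M > 0. Let Ω ⊂ ℝ^N be a bounded open set with nonempty boundary ∂Ω such that ℋ^{N-1}(∂Ω ∩ B_r(y)) ≤ M r^{N-1} for every y ∈ ∂Ω and every r > 0. Then there exists c > 0, depending only on N, α and M, such that for every x ∈ Ω: ∫_{∂Ω} |x - y|^{α - N} dℋ^{N-1}(y) ≤ c · dist(x, ∂Ω)^{α - 1}. -/
/-!
Cut the boundary into the dyadic shells `2ᵏ d ≤ |x - y| < 2ᵏ⁺¹ d`, where
`d = dist(x, ∂Ω)`. Each shell lies in a ball of radius `2ᵏ⁺² d` centred at a boundary point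
`y₀` with `|x - y₀| < 2d`, so upper Ahlfors regularity bounds its measure by
`M (2ᵏ⁺² d)^{N-1}`, while the kernel is at most `(2ᵏ d)^{α-N}` on it. The `k`-th
contribution is therefore a constant times `d^{α-1} 2^{k(α-1)}`, and the geometric series
converges because `α < 1`.
-/

open MeasureTheory Set Metric

lemma rpow_mul_rpow_four_mul (M : ℝ) {r : ℝ} (hr : 0 < r) (p s : ℝ) :
    r ^ p * (M * (4 * r) ^ s) = M * 4 ^ s * r ^ (p + s) := by
  rw [Real.mul_rpow (by norm_num) hr.le, Real.rpow_add hr]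
  ring

lemma two_pow_mul_rpow {d : ℝ} (hd : 0 < d) (t : ℝ) (k : ℕ) :
    (2 ^ k * d) ^ t = d ^ t * (2 ^ t) ^ k := by
  rw [Real.mul_rpow (by positivity) hd.le, Real.rpow_pow_comm zero_le_two]
  ring

lemma ofReal_tsum_mul_geometric {C q : ℝ} (hC : 0 ≤ C) (hq₀ : 0 ≤ q) (hq₁ : q < 1) :
    ∑' k : ℕ, ENNReal.ofReal (C * q ^ k) = ENNReal.ofReal (C / (1 - q)) := by
  rw [← ENNReal.ofReal_tsum_of_nonneg (fun k => by positivity)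
      ((summable_geometric_of_lt_one hq₀ hq₁).mul_left C),
    tsum_mul_left, tsum_geometric_of_lt_one hq₀ hq₁, div_eq_mul_inv]

section DyadicShells

variable {X : Type*} [PseudoMetricSpace X]

lemma compl_ball_subset_iUnion_ball_diff_ball (x : X) {d : ℝ} (hd : 0 < d) :
    (ball x d)ᶜ ⊆ ⋃ k : ℕ, ball x (2 ^ (k + 1) * d) \ ball x (2 ^ k * d) := by
  intro y hy
  rw [mem_compl_iff, mem_ball, not_lt, dist_comm] at hy
  obtain ⟨k, hk_le, hk_lt⟩ :=
    exists_nat_pow_near ((one_le_div hd).2 hy) (one_lt_two : (1 : ℝ) < 2)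
  refine mem_iUnion.2 ⟨k, ?_, ?_⟩
  · rw [mem_ball, dist_comm]
    exact (div_lt_iff₀ hd).1 hk_lt
  · rw [mem_ball, dist_comm, not_lt]
    exact (le_div_iff₀ hd).1 hk_le

variable [MeasurableSpace X] {μ : Measure X}

lemma measure_inter_ball_le_of_upper_regular {F : Set X} {M s : ℝ}
    (hreg : ∀ y ∈ F, ∀ r > (0 : ℝ), μ (F ∩ ball y r) ≤ ENNReal.ofReal (M * r ^ s))
    {x y₀ : X} (hy₀ : y₀ ∈ F) {R : ℝ} (hR : dist x y₀ < R) :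
    μ (F ∩ ball x R) ≤ ENNReal.ofReal (M * (2 * R) ^ s) := by
  have hball : ball x R ⊆ ball y₀ (2 * R) := ball_subset_ball' (by linarith)
  exact (measure_mono (inter_subset_inter_right F hball)).trans
    (hreg y₀ hy₀ _ (by linarith [dist_nonneg (x := x) (y := y₀)]))

lemma setLIntegral_dist_rpow_le_of_subset_compl_ball {x : X} {A : Set X} {r p : ℝ}
    (hr : 0 < r) (hp : p ≤ 0) (hA : A ⊆ (ball x r)ᶜ) :
    ∫⁻ y in A, ENNReal.ofReal (dist x y ^ p) ∂μ ≤ ENNReal.ofReal (r ^ p) * μ A := by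
  calc ∫⁻ y in A, ENNReal.ofReal (dist x y ^ p) ∂μ
      ≤ ∫⁻ _ in A, ENNReal.ofReal (r ^ p) ∂μ := by
        refine setLIntegral_mono measurable_const fun y hy => ENNReal.ofReal_le_ofReal ?_
        have hry : r ≤ dist x y := by simpa [dist_comm] using hA hy
        exact Real.rpow_le_rpow_of_nonpos hr hry hp
    _ = ENNReal.ofReal (r ^ p) * μ A := setLIntegral_const _ _

lemma setLIntegral_dyadic_shell_le {F : Set X} {M s p : ℝ}
    (hreg : ∀ y ∈ F, ∀ r > (0 : ℝ), μ (F ∩ ball y r) ≤ ENNReal.ofReal (M * r ^ s))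
    (hp : p ≤ 0) {x y₀ : X} {d : ℝ} (hd : 0 < d) (hy₀ : y₀ ∈ F)
    (hxy₀ : dist x y₀ < 2 * d) (k : ℕ) :
    ∫⁻ y in F ∩ (ball x (2 ^ (k + 1) * d) \ ball x (2 ^ k * d)),
        ENNReal.ofReal (dist x y ^ p) ∂μ ≤
      ENNReal.ofReal (M * 4 ^ s * d ^ (p + s) * (2 ^ (p + s)) ^ k) := by
  set r : ℝ := 2 ^ k * d
  have hr : 0 < r := by positivity
  have hnear : dist x y₀ < 2 ^ (k + 1) * d := by
    nlinarith [one_le_pow₀ (n := k) (one_le_two : (1 : ℝ) ≤ 2), pow_succ (2 : ℝ) k]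
  have hmeas : μ (F ∩ (ball x (2 ^ (k + 1) * d) \ ball x r)) ≤
      ENNReal.ofReal (M * (4 * r) ^ s) := by
    have h := measure_inter_ball_le_of_upper_regular hreg hy₀ hnear
    rw [show 2 * (2 ^ (k + 1) * d) = 4 * r by rw [pow_succ]; ring] at h
    exact (measure_mono (inter_subset_inter_right F sdiff_subset)).trans h
  calc _ ≤ ENNReal.ofReal (r ^ p) * μ (F ∩ (ball x (2 ^ (k + 1) * d) \ ball x r)) :=
        setLIntegral_dist_rpow_le_of_subset_compl_ball hr hp
          (inter_subset_right.trans (sdiff_subset_compl _ _))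
    _ ≤ ENNReal.ofReal (r ^ p) * ENNReal.ofReal (M * (4 * r) ^ s) := by gcongr
    _ = _ := by
      rw [← ENNReal.ofReal_mul (by positivity), rpow_mul_rpow_four_mul M hr,
        two_pow_mul_rpow hd]
      ring_nf

theorem lintegral_dist_rpow_le_infDist_rpow {F : Set X} {M s p : ℝ} (hM : 0 ≤ M)
    (hreg : ∀ y ∈ F, ∀ r > (0 : ℝ), μ (F ∩ ball y r) ≤ ENNReal.ofReal (M * r ^ s))
    (hp : p ≤ 0) (hps : p + s < 0) (hF : F.Nonempty) {x : X} (hx : 0 < infDist x F) :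
    ∫⁻ y in F, ENNReal.ofReal (dist x y ^ p) ∂μ ≤
      ENNReal.ofReal (M * 4 ^ s / (1 - 2 ^ (p + s)) * infDist x F ^ (p + s)) := by
  set d := infDist x F
  obtain ⟨y₀, hy₀, hxy₀⟩ : ∃ y ∈ F, dist x y < 2 * d :=
    (infDist_lt_iff hF).1 (by linarith)
  have hcover : F ⊆ ⋃ k : ℕ, F ∩ (ball x (2 ^ (k + 1) * d) \ ball x (2 ^ k * d)) := by
    rw [← inter_iUnion]
    exact subset_inter subset_rfl (disjoint_ball_infDist.subset_compl_left.trans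
      (compl_ball_subset_iUnion_ball_diff_ball x hx))
  have hq₁ : (2 : ℝ) ^ (p + s) < 1 := Real.rpow_lt_one_of_one_lt_of_neg one_lt_two hps
  calc ∫⁻ y in F, ENNReal.ofReal (dist x y ^ p) ∂μ
      ≤ ∑' k : ℕ, ∫⁻ y in F ∩ (ball x (2 ^ (k + 1) * d) \ ball x (2 ^ k * d)),
          ENNReal.ofReal (dist x y ^ p) ∂μ :=
        (lintegral_mono_set hcover).trans (lintegral_iUnion_le _ _)
    _ ≤ ∑' k : ℕ, ENNReal.ofReal (M * 4 ^ s * d ^ (p + s) * (2 ^ (p + s)) ^ k) :=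
        ENNReal.tsum_le_tsum (setLIntegral_dyadic_shell_le hreg hp hx hy₀ hxy₀)
    _ = _ := by
      rw [ofReal_tsum_mul_geometric (by positivity) (by positivity) hq₁]
      ring_nf

end DyadicShells

/-- If `Ω ⊂ ℝ^N` is bounded open with nonempty boundary whose `(N-1)`-dimensional Hausdorff
measure is upper Ahlfors regular with constant `M`, then there is `c > 0` depending only on
`N, α, M` such that `∫_{∂Ω} |x-y|^{α-N} dℋ^{N-1}(y) ≤ c dist(x,∂Ω)^{α-1}` for all `x ∈ Ω`. -/
theorem stmt_5 (N : ℕ) (hN : 2 ≤ N) (α M : ℝ) (hα : α ∈ Ioo (0:ℝ) 1) (hM : 0 < M) :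
    ∃ c : ℝ, 0 < c ∧
      ∀ (Ω : Set (EuclideanSpace ℝ (Fin N))), IsOpen Ω → Bornology.IsBounded Ω →
        (frontier Ω).Nonempty →
        (∀ y ∈ frontier Ω, ∀ r > (0:ℝ),
          μH[(N:ℝ) - 1] (frontier Ω ∩ Metric.ball y r) ≤ ENNReal.ofReal (M * r ^ ((N:ℝ) - 1))) →
        ∀ x ∈ Ω,
          ∫⁻ y in frontier Ω, ENNReal.ofReal (dist x y ^ (α - N)) ∂(μH[(N:ℝ) - 1]) ≤
            ENNReal.ofReal (c * Metric.infDist x (frontier Ω) ^ (α - 1)) := by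
  have hexp : α - N + (N - 1) = α - 1 := by ring
  have hα₁ : α - 1 < 0 := by linarith [hα.2]
  have hq₁ : (2 : ℝ) ^ (α - 1) < 1 := Real.rpow_lt_one_of_one_lt_of_neg one_lt_two hα₁
  refine ⟨M * 4 ^ ((N : ℝ) - 1) / (1 - 2 ^ (α - 1)), div_pos (by positivity) (by linarith), ?_⟩
  intro Ω hΩ _ hF hreg x hx
  have hxF : x ∉ frontier Ω := fun h => (hΩ.frontier_eq ▸ h).2 hx
  have hd : 0 < infDist x (frontier Ω) :=
    (isClosed_frontier.notMem_iff_infDist_pos hF).1 hxF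
  have hp : α - N ≤ 0 := by
    have : (2 : ℝ) ≤ N := by exact_mod_cast hN
    linarith [hα.2]
  simpa only [hexp] using
    lintegral_dist_rpow_le_infDist_rpow hM.le hreg hp (hexp ▸ hα₁) hF hd
end

section
/- Let α ∈ (0,1) and let g : [0,∞) → [0,∞) be nondecreasing with ∫_1^∞ g(s) s^{-1-(1+α)/(1-α)} ds < ∞. Then for every d > 0 and every k > 0, ∫_0^d t^α g(k t^{α-1}) dt < ∞. -/
/-!
Substituting `s = k t^(α-1)` maps `(0, d)` decreasingly onto `(k d^(α-1), ∞)` and turns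
`t^α dt` into a constant multiple of `s^(-1 - (1+α)/(1-α)) ds`, so the integral becomes a
constant times `∫_{k d^(α-1)}^∞ g(s) s^(-1 - (1+α)/(1-α)) ds`. Beyond `1` this is finite by
hypothesis; on the bounded part below `1` the integrand is bounded, since `g` is monotone.
-/

open MeasureTheory Set

lemma image_const_mul_rpow_Ioo {p k d : ℝ} (hp : p < 0) (hk : 0 < k) (hd : 0 < d) :
    (fun t => k * t ^ p) '' Ioo 0 d = Ioi (k * d ^ p) := by
  ext s
  constructor
  · rintro ⟨t, ⟨ht0, htd⟩, rfl⟩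
    exact mul_lt_mul_of_pos_left (Real.rpow_lt_rpow_of_neg ht0 htd hp) hk
  · intro hs
    have hsk : d ^ p < s / k := (lt_div_iff₀' hk).mpr hs
    have hs0 : 0 < s / k := (Real.rpow_pos_of_pos hd p).trans hsk
    refine ⟨(s / k) ^ p⁻¹, ⟨Real.rpow_pos_of_pos hs0 _, ?_⟩, ?_⟩
    · calc (s / k) ^ p⁻¹ < (d ^ p) ^ p⁻¹ :=
            Real.rpow_lt_rpow_of_neg (Real.rpow_pos_of_pos hd p) hsk (inv_lt_zero.mpr hp)
        _ = d := Real.rpow_rpow_inv hd.le hp.ne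
    · beta_reduce
      rw [Real.rpow_inv_rpow hs0.le hp.ne, mul_div_cancel₀ _ hk.ne']

lemma abs_deriv_mul_weight_eq_rpow {α k t : ℝ} (hα : α < 1) (hk : 0 < k) (ht : 0 < t) :
    |k * ((α - 1) * t ^ (α - 1 - 1))| * (k ^ ((1 + α) / (1 - α)) / (1 - α)) *
        (k * t ^ (α - 1)) ^ (-1 - (1 + α) / (1 - α)) =
      t ^ α := by
  have h1α : 0 < 1 - α := by linarith
  have hexp : -1 - (1 + α) / (1 - α) = -((1 + α) / (1 - α)) - 1 := by ring
  have htpow : (t ^ (α - 1)) ^ (-1 - (1 + α) / (1 - α)) = t ^ (2 : ℝ) := by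
    rw [← Real.rpow_mul ht.le]
    congr 1
    field_simp
    ring
  rw [Real.mul_rpow hk.le (Real.rpow_nonneg ht.le _), htpow, hexp,
    Real.rpow_sub_one hk.ne', Real.rpow_neg hk.le,
    abs_of_nonpos (mul_nonpos_of_nonneg_of_nonpos hk.le
      (mul_nonpos_of_nonpos_of_nonneg (by linarith) (Real.rpow_nonneg ht.le _)))]
  have hkq : k ^ ((1 + α) / (1 - α)) ≠ 0 := (Real.rpow_pos_of_pos hk _).ne'
  have ht2 : t ^ (α - 1 - 1) * t ^ (2 : ℝ) = t ^ α := by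
    rw [← Real.rpow_add ht]; ring_nf
  field_simp
  linear_combination (1 - α) * ht2

lemma lintegral_Ioo_rpow_mul_comp_const_mul_rpow {α k d : ℝ} (hα : α < 1) (hk : 0 < k)
    (hd : 0 < d) (H : ℝ → ENNReal) :
    ∫⁻ t in Ioo 0 d, ENNReal.ofReal (t ^ α) * H (k * t ^ (α - 1)) =
      ENNReal.ofReal (k ^ ((1 + α) / (1 - α)) / (1 - α)) *
        ∫⁻ s in Ioi (k * d ^ (α - 1)), ENNReal.ofReal (s ^ (-1 - (1 + α) / (1 - α))) * H s := by
  have hp : α - 1 < 0 := by linarith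
  have hderiv : ∀ t ∈ Ioo 0 d, HasDerivWithinAt (fun t => k * t ^ (α - 1))
      (k * ((α - 1) * t ^ (α - 1 - 1))) (Ioo 0 d) t := fun t ht =>
    ((Real.hasDerivAt_rpow_const (Or.inl ht.1.ne')).const_mul k).hasDerivWithinAt
  have hanti : StrictAntiOn (fun t => k * t ^ (α - 1)) (Ioo 0 d) := fun t₁ ht₁ _ _ h =>
    mul_lt_mul_of_pos_left (Real.rpow_lt_rpow_of_neg ht₁.1 h hp) hk
  rw [← lintegral_const_mul' _ _ ENNReal.ofReal_ne_top, ← image_const_mul_rpow_Ioo hp hk hd,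
    lintegral_image_eq_lintegral_abs_deriv_mul measurableSet_Ioo hderiv hanti.injOn]
  refine setLIntegral_congr_fun measurableSet_Ioo fun t ht => ?_
  rw [← mul_assoc, ← mul_assoc, ← ENNReal.ofReal_mul (abs_nonneg _),
    ← ENNReal.ofReal_mul (by positivity), abs_deriv_mul_weight_eq_rpow hα hk ht.1]

lemma setLIntegral_Ioi_rpow_mul_lt_top {g : ℝ → ℝ} {b r : ℝ} (hb : 0 < b) (hr : r ≤ 0)
    (hg : MonotoneOn g (Ioi 0)) (hint : ∫⁻ s in Ioi 1, ENNReal.ofReal (g s * s ^ r) < ⊤) :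
    ∫⁻ s in Ioi b, ENNReal.ofReal (s ^ r) * ENNReal.ofReal (g s) < ⊤ := by
  have hnear : ∫⁻ s in Ioc b 1, ENNReal.ofReal (s ^ r) * ENNReal.ofReal (g s) < ⊤ := by
    refine setLIntegral_lt_top_of_le_nnreal measure_Ioc_lt_top.ne
      ⟨Real.toNNReal (b ^ r) * Real.toNNReal (g 1), fun s hs => ?_⟩
    have hs0 : 0 < s := hb.trans hs.1
    rw [ENNReal.coe_mul]
    gcongr
    · exact ENNReal.ofReal_le_ofReal (Real.rpow_le_rpow_of_nonpos hb hs.1.le hr)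
    · exact ENNReal.ofReal_le_ofReal (hg hs0 (mem_Ioi.mpr one_pos) hs.2)
  have hfar : ∫⁻ s in Ioi 1, ENNReal.ofReal (s ^ r) * ENNReal.ofReal (g s) < ⊤ := by
    refine lt_of_eq_of_lt (setLIntegral_congr_fun measurableSet_Ioi fun s hs => ?_) hint
    rw [mul_comm, ENNReal.ofReal_mul' (Real.rpow_nonneg (zero_le_one.trans hs.le) _)]
  calc ∫⁻ s in Ioi b, ENNReal.ofReal (s ^ r) * ENNReal.ofReal (g s)
      ≤ ∫⁻ s in Ioc b 1 ∪ Ioi 1, ENNReal.ofReal (s ^ r) * ENNReal.ofReal (g s) :=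
        lintegral_mono_set fun s hs => (le_or_gt s 1).imp (fun h => ⟨hs, h⟩) id
    _ ≤ _ := lintegral_union_le _ _ _
    _ < ⊤ := ENNReal.add_lt_top.mpr ⟨hnear, hfar⟩

theorem stmt_10_general (α : ℝ) (hα : α ∈ Ioo (0:ℝ) 1) (g : ℝ → ℝ)
    (hg_mono : MonotoneOn g (Ici (0:ℝ)))
    (hg_int : ∫⁻ s in Ioi (1:ℝ), ENNReal.ofReal (g s * s ^ (-1 - (1+α)/(1-α))) < ⊤) :
    ∀ d > (0:ℝ), ∀ k > (0:ℝ),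
      ∫⁻ t in Ioo (0:ℝ) d, ENNReal.ofReal (t ^ α * g (k * t ^ (α - 1))) < ⊤ := by
  intro d hd k hk
  have hexp : -1 - (1 + α) / (1 - α) ≤ 0 := by
    have : 0 ≤ (1 + α) / (1 - α) := div_nonneg (by linarith [hα.1]) (by linarith [hα.2])
    linarith
  have hsplit : ∀ t ∈ Ioo 0 d, ENNReal.ofReal (t ^ α * g (k * t ^ (α - 1))) =
      ENNReal.ofReal (t ^ α) * ENNReal.ofReal (g (k * t ^ (α - 1))) := fun t ht =>
    ENNReal.ofReal_mul (Real.rpow_nonneg ht.1.le _)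
  rw [setLIntegral_congr_fun measurableSet_Ioo hsplit,
    lintegral_Ioo_rpow_mul_comp_const_mul_rpow hα.2 hk hd (fun s => ENNReal.ofReal (g s))]
  exact ENNReal.mul_lt_top ENNReal.ofReal_lt_top <|
    setLIntegral_Ioi_rpow_mul_lt_top (by positivity) hexp (hg_mono.mono Ioi_subset_Ici_self) hg_int

/-- For `α ∈ (0,1)` and `g : [0,∞) → [0,∞)` nondecreasing with
`∫_1^∞ g(s) s^{-1-(1+α)/(1-α)} ds < ∞`, one has `∫_0^d t^α g(k t^{α-1}) dt < ∞`
for every `d > 0` and `k > 0`. -/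
theorem stmt_10 (α : ℝ) (hα : α ∈ Ioo (0:ℝ) 1) (g : ℝ → ℝ)
    (hg_mono : MonotoneOn g (Ici (0:ℝ))) (hg_nonneg : ∀ s ≥ (0:ℝ), 0 ≤ g s)
    (hg_int : ∫⁻ s in Ioi (1:ℝ), ENNReal.ofReal (g s * s ^ (-1 - (1+α)/(1-α))) < ⊤) :
    ∀ d > (0:ℝ), ∀ k > (0:ℝ),
      ∫⁻ t in Ioo (0:ℝ) d, ENNReal.ofReal (t ^ α * g (k * t ^ (α - 1))) < ⊤ :=
  stmt_10_general α hα g hg_mono hg_int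
end
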